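/- arXiv:1808.07570 — 10 statements merged into one kernel-verified Lean document; each statement's English description precedes it below -/
import Mathlib

section
/- A topological space X is n-Hausdorff (for n ≥ 2) if and only if every open ultrafilter on X has at most n−1 adherent points. -/
open Set Topology Function

universe u v

/-- A space is `n`-Hausdorff if any `n` distinct points admit open neighborhoods
with empty intersection. -/
def NHausdorff (X : Type u) [TopologicalSpace X] (n : ℕ) : Prop :=
  ∀ x : Fin n → X, Function.Injective x →
    ∃ U : Fin n → Set X, (∀ i, IsOpen (U i) ∧ x i ∈ U i) ∧ (⋂ i, U i) = (∅ : Set X)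

/-- An open filter on `X`: a nonempty family of nonempty open sets closed under
finite intersections and open supersets. -/
structure IsOpenFilter {X : Type u} [TopologicalSpace X] (F : Set (Set X)) : Prop where
  nonempty : F.Nonempty
  isOpen_mem : ∀ U ∈ F, IsOpen U
  nonempty_mem : ∀ U ∈ F, U.Nonempty
  inter_mem : ∀ U ∈ F, ∀ V ∈ F, U ∩ V ∈ F
  superset_mem : ∀ U ∈ F, ∀ V : Set X, IsOpen V → U ⊆ V → V ∈ F

/-- An open ultrafilter: a maximal open filter. -/
def IsOpenUltrafilter {X : Type u} [TopologicalSpace X] (F : Set (Set X)) : Prop :=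
  IsOpenFilter F ∧ ∀ G : Set (Set X), IsOpenFilter G → F ⊆ G → G = F

/-- The adherence of a family of sets: `⋂ {cl U : U ∈ F}`. -/
def adh {X : Type u} [TopologicalSpace X] (F : Set (Set X)) : Set X :=
  ⋂ U ∈ F, closure U

variable {X : Type u} [TopologicalSpace X]

lemma IsOpenFilter.univ_mem {F : Set (Set X)} (hF : IsOpenFilter F) : univ ∈ F := by
  obtain ⟨U, hU⟩ := hF.nonempty
  exact hF.superset_mem U hU univ isOpen_univ (subset_univ U)

lemma ultra_mem {F : Set (Set X)} (hF : IsOpenUltrafilter F) {U : Set X} (hU : IsOpen U)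
    (h : ∀ V ∈ F, (U ∩ V).Nonempty) : U ∈ F := by
  set G : Set (Set X) := {W | IsOpen W ∧ ∃ V ∈ F, U ∩ V ⊆ W} with hG
  have hGF : IsOpenFilter G := by
    refine ⟨⟨univ, isOpen_univ, ?_⟩, fun W hW => hW.1, ?_, ?_, ?_⟩
    · obtain ⟨V, hV⟩ := hF.1.nonempty
      exact ⟨V, hV, subset_univ _⟩
    · rintro W ⟨hWo, V, hV, hUV⟩
      exact ((h V hV).mono hUV)
    · rintro W₁ ⟨h1, V₁, hV₁, hs₁⟩ W₂ ⟨h2, V₂, hV₂, hs₂⟩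
      refine ⟨h1.inter h2, V₁ ∩ V₂, hF.1.inter_mem V₁ hV₁ V₂ hV₂, ?_⟩
      exact fun z hz => ⟨hs₁ ⟨hz.1, hz.2.1⟩, hs₂ ⟨hz.1, hz.2.2⟩⟩
    · rintro W ⟨hWo, V, hV, hs⟩ W' hW'o hWW'
      exact ⟨hW'o, V, hV, hs.trans hWW'⟩
  have hsub : F ⊆ G := by
    intro V hV
    exact ⟨hF.1.isOpen_mem V hV, V, hV, inter_subset_right⟩
  have heq := hF.2 G hGF hsub
  rw [← heq]
  obtain ⟨V, hV⟩ := hF.1.nonempty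
  exact ⟨hU, V, hV, inter_subset_left⟩

lemma finset_iInter_mem {F : Set (Set X)} (hF : IsOpenFilter F) {ι : Type v}
    (s : Finset ι) (U : ι → Set X) (h : ∀ i ∈ s, U i ∈ F) : (⋂ i ∈ s, U i) ∈ F := by
  classical
  induction s using Finset.induction_on with
  | empty => simpa using hF.univ_mem
  | @insert a s ha ih =>
    rw [Finset.set_biInter_insert]
    exact hF.inter_mem _ (h a (Finset.mem_insert_self a s)) _
      (ih fun i hi => h i (Finset.mem_insert_of_mem hi))

lemma exists_ultra {F : Set (Set X)} (hF : IsOpenFilter F) :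
    ∃ G, IsOpenUltrafilter G ∧ F ⊆ G := by
  obtain ⟨G, hG, hmax⟩ := zorn_subset_nonempty {G | IsOpenFilter G ∧ F ⊆ G}
    (fun c hc hchain ⟨G₀, hG₀⟩ => by
      refine ⟨⋃₀ c, ⟨⟨?_, ?_, ?_, ?_, ?_⟩, ?_⟩, fun H hH => subset_sUnion_of_mem hH⟩
      · obtain ⟨U, hU⟩ := (hc hG₀).1.nonempty
        exact ⟨U, G₀, hG₀, hU⟩
      · rintro U ⟨H, hH, hU⟩; exact (hc hH).1.isOpen_mem U hU
      · rintro U ⟨H, hH, hU⟩; exact (hc hH).1.nonempty_mem U hU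
      · rintro U ⟨H₁, hH₁, hU⟩ V ⟨H₂, hH₂, hV⟩
        rcases hchain.total hH₁ hH₂ with h | h
        · exact ⟨H₂, hH₂, (hc hH₂).1.inter_mem U (h hU) V hV⟩
        · exact ⟨H₁, hH₁, (hc hH₁).1.inter_mem U hU V (h hV)⟩
      · rintro U ⟨H, hH, hU⟩ V hVo hUV
        exact ⟨H, hH, (hc hH).1.superset_mem U hU V hVo hUV⟩
      · exact (hc hG₀).2.trans (subset_sUnion_of_mem hG₀)) F ⟨hF, subset_rfl⟩
  refine ⟨G, ⟨hmax.1.1, fun H hH hGH => hmax.eq_of_le ⟨hH, hmax.1.2.trans hGH⟩ hGH |>.symm⟩,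
    hmax.1.2⟩

theorem stmt0 {X : Type u} [TopologicalSpace X] (n : ℕ) (hn : 2 ≤ n) :
    NHausdorff X n ↔
      ∀ F : Set (Set X), IsOpenUltrafilter F → (adh F).encard ≤ (n - 1 : ℕ) := by
  constructor
  · intro hX F hF
    by_contra hcard
    have h1 : ((n - 1 : ℕ) : ℕ∞) + 1 ≤ (adh F).encard :=
      Order.add_one_le_of_lt (lt_of_not_ge hcard)
    have h2 : ((n : ℕ) : ℕ∞) ≤ (adh F).encard := by
      have hnn : (n - 1 : ℕ) + 1 = n := by omega
      calc ((n : ℕ) : ℕ∞) = ((n - 1 : ℕ) : ℕ∞) + 1 := by exact_mod_cast hnn.symm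
        _ ≤ _ := h1
    obtain ⟨t, hts, ht⟩ := Set.exists_subset_encard_eq h2
    have htfin : t.Finite := Set.finite_of_encard_eq_coe ht
    haveI := htfin.to_subtype
    have hcardt : Nat.card t = n := by
      rw [Nat.card_coe_set_eq, Set.ncard_def, ht]; simp
    let e : t ≃ Fin n := Finite.equivFinOfCardEq hcardt
    set x : Fin n → X := fun i => (e.symm i : X) with hx
    have hinj : Function.Injective x :=
      Subtype.val_injective.comp e.symm.injective
    obtain ⟨U, hU, hUempty⟩ := hX x hinj
    have hmem : ∀ i, U i ∈ F := by
      intro i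
      refine ultra_mem hF (hU i).1 ?_
      intro V hV
      have hxadh : x i ∈ adh F := hts (e.symm i).2
      have : x i ∈ closure V := by
        have := Set.mem_iInter₂.1 hxadh V hV
        exact this
      exact (mem_closure_iff.1 this) (U i) (hU i).1 (hU i).2
    have : (⋂ i, U i) ∈ F := by
      have h := finset_iInter_mem hF.1 Finset.univ U (fun i _ => hmem i)
      simpa using h
    rw [hUempty] at this
    exact (hF.1.nonempty_mem _ this).ne_empty rfl
  · intro h x hinj
    by_contra hno
    push_neg at hno
    set F : Set (Set X) := {U | IsOpen U ∧ ∃ V : Fin n → Set X,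
      (∀ i, IsOpen (V i) ∧ x i ∈ V i) ∧ (⋂ i, V i) ⊆ U} with hFdef
    have hne : ∀ (V : Fin n → Set X), (∀ i, IsOpen (V i) ∧ x i ∈ V i) →
        (⋂ i, V i).Nonempty := by
      intro V hV
      exact hno V hV
    have hF : IsOpenFilter F := by
      refine ⟨⟨univ, isOpen_univ, fun _ => univ, fun i => ⟨isOpen_univ, mem_univ _⟩,
        subset_univ _⟩, fun U hU => hU.1, ?_, ?_, ?_⟩
      · rintro U ⟨hUo, V, hV, hVU⟩
        exact (hne V hV).mono hVU
      · rintro U₁ ⟨h1, V₁, hV₁, hs₁⟩ U₂ ⟨h2, V₂, hV₂, hs₂⟩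
        refine ⟨h1.inter h2, fun i => V₁ i ∩ V₂ i,
          fun i => ⟨(hV₁ i).1.inter (hV₂ i).1, (hV₁ i).2, (hV₂ i).2⟩, ?_⟩
        intro z hz
        simp only [Set.mem_iInter, Set.mem_inter_iff] at hz ⊢
        exact ⟨hs₁ (Set.mem_iInter.2 fun i => (hz i).1),
          hs₂ (Set.mem_iInter.2 fun i => (hz i).2)⟩
      · rintro U ⟨hUo, V, hV, hs⟩ W hWo hUW
        exact ⟨hWo, V, hV, hs.trans hUW⟩
    obtain ⟨G, hG, hFG⟩ := exists_ultra hF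
    have hWF : ∀ i (W : Set X), IsOpen W → x i ∈ W → W ∈ F := by
      classical
      intro i W hWo hxW
      refine ⟨hWo, fun j => if j = i then W else univ, ?_, ?_⟩
      · intro j
        by_cases hj : j = i <;> simp [hj, hWo, hxW]
      · intro z hz
        have := Set.mem_iInter.1 hz i
        simpa using this
    have hadh : ∀ i, x i ∈ adh G := by
      intro i
      refine Set.mem_iInter₂.2 fun U hU => ?_
      rw [mem_closure_iff]
      intro W hWo hxW
      have hWG : W ∈ G := hFG (hWF i W hWo hxW)
      have := hG.1.nonempty_mem _ (hG.1.inter_mem W hWG U hU)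
      exact this
    have hrange : Set.range x ⊆ adh G := by
      rintro _ ⟨i, rfl⟩; exact hadh i
    have hcard : ((n : ℕ) : ℕ∞) ≤ (adh G).encard := by
      have h1 : (Set.range x).encard = n := by
        rw [← Set.image_univ, hinj.encard_image]
        simp [Set.encard_univ]
      rw [← h1]
      exact Set.encard_le_encard hrange
    have h2 := (h G hG)
    have : ((n : ℕ) : ℕ∞) ≤ ((n - 1 : ℕ) : ℕ∞) := hcard.trans h2
    have : n ≤ n - 1 := by exact_mod_cast this
    omega
end

section
/- A topological space X is n-Hausdorff (for n ≥ 2) if and only if every open filter base on X converges to at most n−1 points. -/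
open Set Topology Function

universe u v

/-- An open filter base: a nonempty family of nonempty open sets such that the
intersection of any two members contains a member. -/
structure IsOpenFilterBase {X : Type u} [TopologicalSpace X] (F : Set (Set X)) : Prop where
  nonempty : F.Nonempty
  isOpen_mem : ∀ U ∈ F, IsOpen U
  nonempty_mem : ∀ U ∈ F, U.Nonempty
  directed : ∀ U ∈ F, ∀ V ∈ F, ∃ W ∈ F, W ⊆ U ∩ V

/-- The set of convergence points of a filter base: `p` such that every open
neighborhood of `p` contains a member of `F`. -/
def convPts {X : Type u} [TopologicalSpace X] (F : Set (Set X)) : Set X :=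
  {p | ∀ N : Set X, IsOpen N → p ∈ N → ∃ U ∈ F, U ⊆ N}

lemma base_iInter {X : Type u} [TopologicalSpace X] {F : Set (Set X)}
    (hF : IsOpenFilterBase F) :
    ∀ (m : ℕ) (V : Fin m → Set X), (∀ i, V i ∈ F) → ∃ W ∈ F, W ⊆ ⋂ i, V i := by
  intro m
  induction m with
  | zero =>
    intro V _
    obtain ⟨W, hW⟩ := hF.nonempty
    exact ⟨W, hW, by simp⟩
  | succ k ih =>
    intro V hV
    obtain ⟨W', hW', hsub⟩ := ih (fun i => V i.succ) (fun i => hV i.succ)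
    obtain ⟨W, hW, hWsub⟩ := hF.directed W' hW' (V 0) (hV 0)
    refine ⟨W, hW, ?_⟩
    intro x hx
    simp only [Set.mem_iInter]
    intro i
    rcases Fin.eq_zero_or_eq_succ i with h0 | ⟨j, rfl⟩
    · exact h0 ▸ (hWsub hx).2
    · exact Set.mem_iInter.1 (hsub (hWsub hx).1) j

lemma encard_range_fin {X : Type u} {n : ℕ} {x : Fin n → X} (hx : Function.Injective x) :
    (Set.range x).encard = n := by
  rw [← Set.image_univ, hx.encard_image, Set.encard_univ]
  simp

theorem stmt1 {X : Type u} [TopologicalSpace X] (n : ℕ) (hn : 2 ≤ n) :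
    NHausdorff X n ↔
      ∀ F : Set (Set X), IsOpenFilterBase F → (convPts F).encard ≤ (n - 1 : ℕ) := by
  constructor
  · intro hH F hF
    by_contra hlt
    push_neg at hlt
    have hn' : (n : ℕ∞) ≤ (convPts F).encard := by
      have h1 := Order.add_one_le_of_lt hlt
      have : ((n - 1 : ℕ) : ℕ∞) + 1 = (n : ℕ∞) := by
        norm_cast
        omega
      rwa [this] at h1
    obtain ⟨t, hts, htc⟩ := Set.exists_subset_encard_eq hn'
    have htfin : t.Finite := Set.finite_of_encard_eq_coe htc
    have hcard : htfin.toFinset.card = n := by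
      have := htfin.encard_eq_coe_toFinset_card
      rw [htc] at this
      exact_mod_cast this.symm
    let e : Fin n ≃ htfin.toFinset := (finCongr hcard.symm).trans htfin.toFinset.equivFin.symm
    set x : Fin n → X := fun i => (e i : X) with hxdef
    have hxinj : Function.Injective x := fun a b hab => by
      apply e.injective
      exact Subtype.ext hab
    have hxconv : ∀ i, x i ∈ convPts F := fun i => by
      have : x i ∈ t := htfin.mem_toFinset.1 (e i).2
      exact hts this
    obtain ⟨U, hU, hUempty⟩ := hH x hxinj
    have hV : ∀ i, ∃ V ∈ F, V ⊆ U i := fun i => hxconv i (U i) (hU i).1 (hU i).2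
    choose V hVF hVsub using hV
    obtain ⟨W, hWF, hWsub⟩ := base_iInter hF n V hVF
    obtain ⟨w, hw⟩ := hF.nonempty_mem W hWF
    have : w ∈ ⋂ i, U i := by
      simp only [Set.mem_iInter]
      exact fun i => hVsub i (Set.mem_iInter.1 (hWsub hw) i)
    rw [hUempty] at this
    exact this
  · intro h x hxinj
    by_contra hc
    push_neg at hc
    haveI : Nonempty (Fin n) := ⟨⟨0, by omega⟩⟩
    set F : Set (Set X) :=
      {V | ∃ U : Fin n → Set X, (∀ i, IsOpen (U i) ∧ x i ∈ U i) ∧ V = ⋂ i, U i} with hFdef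
    have hFbase : IsOpenFilterBase F := by
      constructor
      · exact ⟨Set.univ, fun _ => Set.univ, fun i => ⟨isOpen_univ, trivial⟩, by simp⟩
      · rintro V ⟨U, hU, rfl⟩
        exact isOpen_iInter_of_finite fun i => (hU i).1
      · rintro V ⟨U, hU, rfl⟩
        exact hc U hU
      · rintro V ⟨U, hU, rfl⟩ V' ⟨U', hU', rfl⟩
        refine ⟨⋂ i, (U i ∩ U' i), ⟨fun i => U i ∩ U' i,
          fun i => ⟨(hU i).1.inter (hU' i).1, (hU i).2, (hU' i).2⟩, rfl⟩, ?_⟩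
        intro w hw
        simp only [Set.mem_iInter, Set.mem_inter_iff] at hw ⊢
        exact ⟨fun i => (hw i).1, fun i => (hw i).2⟩
    have hconv : ∀ j, x j ∈ convPts F := by
      intro j N hN hxN
      refine ⟨⋂ i, Function.update (fun _ => (Set.univ : Set X)) j N i,
        ⟨_, fun i => ?_, rfl⟩, ?_⟩
      · rcases eq_or_ne i j with rfl | hij
        · simpa using ⟨hN, hxN⟩
        · simp [Function.update_of_ne hij]
      · intro w hw
        have := Set.mem_iInter.1 hw j
        simpa using this
    have hle := h F hFbase
    have hsub : Set.range x ⊆ convPts F := by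
      rintro _ ⟨j, rfl⟩; exact hconv j
    have hge : (n : ℕ∞) ≤ (convPts F).encard := by
      rw [← encard_range_fin hxinj]
      exact Set.encard_mono hsub
    have : (n : ℕ∞) ≤ ((n - 1 : ℕ) : ℕ∞) := le_trans hge hle
    have : n ≤ n - 1 := by exact_mod_cast this
    omega
end

section
/- A topological space X is n-Hausdorff (for n ≥ 2) if and only if the diagonal Δₙ = {(x,…,x) : x ∈ X} is closed in the subspace Y ∪ Δₙ of Xⁿ, where Y is the set of n-tuples of pairwise distinct points of X. -/
open Set Topology Function

universe u v

theorem stmt2 {X : Type u} [TopologicalSpace X] (n : ℕ) (hn : 2 ≤ n) :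
    NHausdorff X n ↔
      (let Δ : Set (Fin n → X) := {g | ∃ x : X, g = fun _ => x}
       let Y : Set (Fin n → X) := {g | Function.Injective g}
       IsClosed {f : ↥(Y ∪ Δ) | (f : Fin n → X) ∈ Δ}) := by
  classical
  show NHausdorff X n ↔ IsClosed {f : ↑({g : Fin n → X | Function.Injective g} ∪
      {g | ∃ x : X, g = fun _ => x}) | (f : Fin n → X) ∈ {g | ∃ x : X, g = fun _ => x}}
  set Δ : Set (Fin n → X) := {g | ∃ x : X, g = fun _ => x} with hΔ
  set Y : Set (Fin n → X) := {g : Fin n → X | Function.Injective g} with hY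
  have hne : ((⟨0, by omega⟩ : Fin n) ≠ ⟨1, by omega⟩) := by
    simp [Fin.ext_iff]
  constructor
  · intro h
    rw [← isOpen_compl_iff]
    choose! U hU hUe using fun f (hf : Function.Injective f) => h f hf
    have key : {f : ↑(Y ∪ Δ) | (f : Fin n → X) ∈ Δ}ᶜ =
        (Subtype.val) ⁻¹' (⋃ f ∈ Y, Set.pi Set.univ (U f)) := by
      ext g
      simp only [mem_compl_iff, mem_setOf_eq, mem_preimage, mem_iUnion, mem_pi, mem_univ,
        forall_true_left]
      constructor
      · intro hg
        have hgY : (g : Fin n → X) ∈ Y := g.2.resolve_right hg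
        exact ⟨g, hgY, fun i => (hU g hgY i).2⟩
      · rintro ⟨f, hf, hgf⟩ ⟨x, hx⟩
        have hmem : x ∈ ⋂ i, U f i := mem_iInter.2 fun i => by
          have := hgf i; rw [hx] at this; exact this
        rw [hUe f hf] at hmem
        exact hmem
    rw [key]
    exact (isOpen_iUnion fun f => isOpen_iUnion fun hf =>
      isOpen_set_pi finite_univ fun i _ => (hU f hf i).1).preimage continuous_subtype_val
  · intro h x hx
    have hxY : x ∈ Y ∪ Δ := Or.inl hx
    have hopen := h.isOpen_compl
    obtain ⟨V, hV, hVeq⟩ := isOpen_induced_iff.mp hopen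
    have hxV : x ∈ V := by
      have : (⟨x, hxY⟩ : ↑(Y ∪ Δ)) ∈ {f : ↑(Y ∪ Δ) | (f : Fin n → X) ∈ Δ}ᶜ := by
        intro hc
        obtain ⟨y, hy⟩ := hc
        have hy' : x = fun _ => y := hy
        exact hne (hx (by rw [hy']))
      rw [← hVeq] at this
      exact this
    obtain ⟨I, u, hu, hsub⟩ := isOpen_pi_iff.mp hV x hxV
    refine ⟨fun i => if i ∈ I then u i else Set.univ, fun i => ⟨?_, ?_⟩, ?_⟩
    · show IsOpen (if i ∈ I then u i else Set.univ)
      split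
      · exact (hu i (by assumption)).1
      · exact isOpen_univ
    · show x i ∈ (if i ∈ I then u i else Set.univ)
      split
      · exact (hu i (by assumption)).2
      · trivial
    · ext y
      simp only [mem_iInter, mem_empty_iff_false, iff_false]
      intro hy
      have hconst : (fun _ : Fin n => y) ∈ V := by
        apply hsub
        intro i hi
        simp only [Finset.mem_coe] at hi
        have := hy i
        rw [if_pos hi] at this
        exact this
      have hmem : (⟨fun _ => y, Or.inr ⟨y, rfl⟩⟩ : ↑(Y ∪ Δ)) ∈
          {f : ↑(Y ∪ Δ) | (f : Fin n → X) ∈ Δ}ᶜ := by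
        rw [← hVeq]; exact hconst
      exact hmem ⟨y, rfl⟩
end

section
/- For a topological space X and n ≥ 2, every open filter F on X satisfies |aF| ≥ n−1 if and only if for every set A ⊆ X with |A| < n−1 and every family U of open sets covering X∖A, there is a finite subfamily V ⊆ U with X = ⋃{cl(V) : V ∈ V}. -/
open Set Topology Function

universe u v

/-!
Both directions rest on the duality between open filters and open families: for an open set
`U`, the open set `(closure U)ᶜ` is disjoint from `U` even after taking closures.  If a family
`𝒰` covering `Aᶜ` had no finite subfamily whose closures cover `X`, the complements
`(⋃ V ∈ 𝒱, closure V)ᶜ`, `𝒱 ⊆ 𝒰` finite, would generate an open filter with adherence inside `A`.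
Conversely the sets `(closure W)ᶜ`, `W ∈ F`, cover the complement of `adh F`, and no finitely
many of them have closures covering `X`, since those closures all miss a point of some `W₁ ∩ ⋯ ∩ Wₖ ∈ F`.
-/

theorem IsOpen.disjoint_closure_compl_closure {X : Type u} [TopologicalSpace X] {U : Set X}
    (hU : IsOpen U) : Disjoint U (closure (closure U)ᶜ) := by
  rw [closure_compl]
  exact disjoint_compl_right.mono_left hU.subset_interior_closure

namespace IsOpenFilter

variable {X : Type u} [TopologicalSpace X] {F : Set (Set X)}

theorem univ_mem_s3 (hF : IsOpenFilter F) : univ ∈ F :=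
  let ⟨U, hU⟩ := hF.nonempty
  hF.superset_mem U hU univ isOpen_univ (subset_univ U)

theorem sInter_mem (hF : IsOpenFilter F) {𝒲 : Set (Set X)} (h𝒲F : 𝒲 ⊆ F) (h𝒲 : 𝒲.Finite) :
    ⋂₀ 𝒲 ∈ F := by
  induction 𝒲, h𝒲 using Set.Finite.induction_on with
  | empty => simpa using hF.univ_mem_s3
  | insert _ _ ih =>
    rw [sInter_insert]
    exact hF.inter_mem _ (h𝒲F (mem_insert _ _)) _ (ih ((subset_insert _ _).trans h𝒲F))

theorem biUnion_closure_compl_closure_ne_univ (hF : IsOpenFilter F) {𝒲 : Set (Set X)}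
    (h𝒲F : 𝒲 ⊆ F) (h𝒲 : 𝒲.Finite) : ⋃ W ∈ 𝒲, closure (closure W)ᶜ ≠ univ := by
  obtain ⟨x, hx⟩ := hF.nonempty_mem _ (hF.sInter_mem h𝒲F h𝒲)
  refine (ne_univ_iff_exists_notMem _).2 ⟨x, ?_⟩
  simp only [mem_iUnion₂, not_exists]
  intro W hW
  exact ((hF.isOpen_mem W (h𝒲F hW)).disjoint_closure_compl_closure).notMem_of_mem_left (hx W hW)

end IsOpenFilter

def closureCoverComplFilter {X : Type u} [TopologicalSpace X] (𝒰 : Set (Set X)) :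
    Set (Set X) :=
  {W | IsOpen W ∧ ∃ 𝒱 ⊆ 𝒰, 𝒱.Finite ∧ (⋃ V ∈ 𝒱, closure V)ᶜ ⊆ W}

section closureCoverComplFilter

variable {X : Type u} [TopologicalSpace X] {𝒰 : Set (Set X)}

theorem isOpenFilter_closureCoverComplFilter
    (h𝒰 : ∀ 𝒱 ⊆ 𝒰, 𝒱.Finite → ⋃ V ∈ 𝒱, closure V ≠ univ) :
    IsOpenFilter (closureCoverComplFilter 𝒰) where
  nonempty := ⟨univ, isOpen_univ, ∅, empty_subset _, finite_empty, subset_univ _⟩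
  isOpen_mem _ hW := hW.1
  nonempty_mem := by
    rintro W ⟨-, 𝒱, h𝒱𝒰, h𝒱, hW⟩
    exact (nonempty_compl.2 (h𝒰 𝒱 h𝒱𝒰 h𝒱)).mono hW
  inter_mem := by
    rintro W₁ ⟨hW₁, 𝒱₁, h𝒱₁𝒰, h𝒱₁, hsub₁⟩ W₂ ⟨hW₂, 𝒱₂, h𝒱₂𝒰, h𝒱₂, hsub₂⟩
    refine ⟨hW₁.inter hW₂, 𝒱₁ ∪ 𝒱₂, union_subset h𝒱₁𝒰 h𝒱₂𝒰, h𝒱₁.union h𝒱₂, ?_⟩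
    rw [biUnion_union, compl_union]
    exact inter_subset_inter hsub₁ hsub₂
  superset_mem := by
    rintro W ⟨-, 𝒱, h𝒱𝒰, h𝒱, hsub⟩ V hV hWV
    exact ⟨hV, 𝒱, h𝒱𝒰, h𝒱, hsub.trans hWV⟩

theorem adh_closureCoverComplFilter_subset (h𝒰 : ∀ U ∈ 𝒰, IsOpen U) :
    adh (closureCoverComplFilter 𝒰) ⊆ (⋃₀ 𝒰)ᶜ := by
  rintro x hx ⟨U, hU, hxU⟩
  have hmem : (closure U)ᶜ ∈ closureCoverComplFilter 𝒰 :=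
    ⟨isClosed_closure.isOpen_compl, {U}, singleton_subset_iff.2 hU, finite_singleton U,
      by simp⟩
  exact (h𝒰 U hU).disjoint_closure_compl_closure.notMem_of_mem_left hxU
    (mem_iInter₂.1 hx _ hmem)

end closureCoverComplFilter

theorem stmt3_general {X : Type u} [TopologicalSpace X] (n : ℕ) :
    (∀ F : Set (Set X), IsOpenFilter F → (n - 1 : ℕ) ≤ (adh F).encard) ↔
      (∀ A : Set X, A.encard < (n - 1 : ℕ) →
        ∀ 𝒰 : Set (Set X), (∀ U ∈ 𝒰, IsOpen U) → Aᶜ ⊆ ⋃₀ 𝒰 →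
          ∃ 𝒱 ⊆ 𝒰, 𝒱.Finite ∧ (⋃ V ∈ 𝒱, closure V) = (univ : Set X)) := by
  constructor
  · intro hadh A hA 𝒰 h𝒰 hcover
    by_contra! hno
    have hsub : adh (closureCoverComplFilter 𝒰) ⊆ A :=
      (adh_closureCoverComplFilter_subset h𝒰).trans (compl_subset_comm.1 hcover)
    exact hA.not_ge <|
      (hadh _ (isOpenFilter_closureCoverComplFilter hno)).trans (encard_le_encard hsub)
  · intro hcover F hF
    by_contra! hlt
    have hcomplCover : (adh F)ᶜ ⊆ ⋃₀ ((fun W ↦ (closure W)ᶜ) '' F) := by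
      intro x hx
      obtain ⟨W, hW, hxW⟩ : ∃ W ∈ F, x ∉ closure W := by simpa [adh] using hx
      exact ⟨_, mem_image_of_mem _ hW, hxW⟩
    obtain ⟨𝒲, h𝒲F, h𝒲, hunion⟩ := exists_subset_image_finite_and.1 <|
      hcover _ hlt _ (forall_mem_image.2 fun _ _ ↦ isClosed_closure.isOpen_compl) hcomplCover
    exact hF.biUnion_closure_compl_closure_ne_univ h𝒲F h𝒲 (by simpa using hunion)

theorem stmt3 {X : Type u} [TopologicalSpace X] (n : ℕ) (hn : 2 ≤ n) :
    (∀ F : Set (Set X), IsOpenFilter F → (n - 1 : ℕ) ≤ (adh F).encard) ↔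
      (∀ A : Set X, A.encard < (n - 1 : ℕ) →
        ∀ 𝒰 : Set (Set X), (∀ U ∈ 𝒰, IsOpen U) → Aᶜ ⊆ ⋃₀ 𝒰 →
          ∃ 𝒱 ⊆ 𝒰, 𝒱.Finite ∧ (⋃ V ∈ 𝒱, closure V) = (univ : Set X)) :=
  stmt3_general n
end

section
/- If X is n-qH-closed and U is an open subset of X, then the closure cl_X(U) with the subspace topology is n-qH-closed. -/
open Set Topology Function

universe u v

/-- `X` is `n`-qH-closed if every open filter on `X` has at least `n-1` adherent points. -/
def NqHClosed (X : Type u) [TopologicalSpace X] (n : ℕ) : Prop :=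
  ∀ F : Set (Set X), IsOpenFilter F → (n - 1 : ℕ) ≤ (adh F).encard

theorem stmt7 {X : Type u} [TopologicalSpace X] (n : ℕ) (hn : 2 ≤ n)
    (h : NqHClosed X n) (U : Set X) (hU : IsOpen U) :
    NqHClosed ↥(closure U) n := by
  intro F hF
  -- the pushed-forward filter on X
  set F' : Set (Set X) := {W | IsOpen W ∧ ∃ V' : Set X, IsOpen V' ∧
    (Subtype.val ⁻¹' V' : Set ↥(closure U)) ∈ F ∧ V' ∩ U ⊆ W} with hF'def
  have huniv : (univ : Set ↥(closure U)) ∈ F := by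
    obtain ⟨V, hV⟩ := hF.nonempty
    exact hF.superset_mem V hV univ isOpen_univ (subset_univ V)
  have hUmem : U ∈ F' := ⟨hU, univ, isOpen_univ, by simpa using huniv, by simp⟩
  have hF' : IsOpenFilter F' := by
    constructor
    · exact ⟨U, hUmem⟩
    · exact fun W hW => hW.1
    · rintro W ⟨hWo, V', hV'o, hV'F, hsub⟩
      have hne : (Subtype.val ⁻¹' V' : Set ↥(closure U)).Nonempty := hF.nonempty_mem _ hV'F
      obtain ⟨⟨x, hx⟩, hxV⟩ := hne
      have : (V' ∩ U).Nonempty := by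
        rcases mem_closure_iff.1 hx V' hV'o hxV with ⟨y, hy⟩
        exact ⟨y, hy⟩
      exact this.mono hsub
    · rintro W1 ⟨h1o, V1, hV1o, hV1F, hs1⟩ W2 ⟨h2o, V2, hV2o, hV2F, hs2⟩
      refine ⟨h1o.inter h2o, V1 ∩ V2, hV1o.inter hV2o, ?_, ?_⟩
      · exact hF.inter_mem _ hV1F _ hV2F
      · rintro x ⟨⟨h1, h2⟩, hu⟩
        exact ⟨hs1 ⟨h1, hu⟩, hs2 ⟨h2, hu⟩⟩
    · rintro W ⟨hWo, V', hV'o, hV'F, hsub⟩ W2 hW2o hWW2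
      exact ⟨hW2o, V', hV'o, hV'F, hsub.trans hWW2⟩
  have hadh : adh F' ⊆ closure U := by
    intro x hx
    have := mem_iInter₂.1 hx U hUmem
    exact this
  have hkey : (Subtype.val ⁻¹' adh F' : Set ↥(closure U)) ⊆ adh F := by
    rintro ⟨x, hxcl⟩ hx
    simp only [mem_preimage] at hx
    refine mem_iInter₂.2 fun V hV => ?_
    obtain ⟨V', hV'o, hV'eq⟩ := isOpen_induced_iff.1 (hF.isOpen_mem V hV)
    have hmem : V' ∩ U ∈ F' := ⟨hV'o.inter hU, V', hV'o, by rwa [hV'eq], subset_rfl⟩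
    have hxc : x ∈ closure (V' ∩ U) := mem_iInter₂.1 hx _ hmem
    rw [closure_subtype]
    refine closure_mono ?_ hxc
    rintro y ⟨hy1, hy2⟩
    exact ⟨⟨y, subset_closure hy2⟩, by rwa [← hV'eq, mem_preimage], rfl⟩
  calc (n - 1 : ℕ) ≤ (adh F').encard := h F' hF'
    _ = (Subtype.val ⁻¹' adh F' : Set ↥(closure U)).encard := by
        rw [← Subtype.val_injective.encard_image,
          Set.image_preimage_eq_inter_range, Subtype.range_val,
          inter_eq_self_of_subset_left hadh]
    _ ≤ (adh F).encard := Set.encard_le_encard hkey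
end

section
/- Let X be the subspace 2 ∪ (ω × 2) of the space Y = 3 ∪ (ω × 3), where Y is topologized by making all points of ω × 3 isolated and giving i ∈ 3 basic neighborhoods U(i,N) = {i} ∪ {(m,j) : j ≠ i, m ≥ N}. Then Y is 3-Hausdorff but not Hausdorff, X is compact Hausdorff (hence H-closed), but X is not closed in Y; in particular X is H-closed but not 3-H-closed. -/
open Set Topology Function

universe u v

/-- `X` is `n`-H-closed: `X` is `n`-Hausdorff and closed in every `n`-Hausdorff space
in which it embeds. -/
def NHClosed (X : Type u) [TopologicalSpace X] (n : ℕ) : Prop :=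
  NHausdorff X n ∧
    ∀ (Z : Type u) (_ : TopologicalSpace Z) (e : X → Z),
      NHausdorff Z n → IsEmbedding e → IsClosed (Set.range e)

/-- The space `Y = 3 ∪ (ω × 3)`. -/
abbrev Y8 : Type := Fin 3 ⊕ (ℕ × Fin 3)

/-- Points of `ω × 3` are isolated; a basic neighborhood of `i ∈ 3` is
`{i} ∪ {(m,j) : j ≠ i, m ≥ N}`. -/
instance Y8top : TopologicalSpace Y8 where
  IsOpen V := ∀ i : Fin 3, Sum.inl i ∈ V →
    ∃ N : ℕ, ∀ m ≥ N, ∀ j : Fin 3, j ≠ i → Sum.inr (m, j) ∈ V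
  isOpen_univ := fun _ _ => ⟨0, fun _ _ _ _ => trivial⟩
  isOpen_inter := by
    intro s t hs ht i hi
    obtain ⟨N1, h1⟩ := hs i hi.1
    obtain ⟨N2, h2⟩ := ht i hi.2
    exact ⟨max N1 N2, fun m hm j hj =>
      ⟨h1 m (le_trans (le_max_left _ _) hm) j hj, h2 m (le_trans (le_max_right _ _) hm) j hj⟩⟩
  isOpen_sUnion := by
    intro S hS i hi
    obtain ⟨s, hsS, his⟩ := hi
    obtain ⟨N, hN⟩ := hS s hsS i his
    exact ⟨N, fun m hm j hj => ⟨s, hsS, hN m hm j hj⟩⟩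

/-- The subspace `X = 2 ∪ (ω × 2)` of `Y8`. -/
def X8 : Set Y8 := (Sum.inl '' {i | i ≠ 2}) ∪ (Sum.inr '' {p | p.2 ≠ 2})

lemma nh2_of_t2 {Z : Type u} [TopologicalSpace Z] [T2Space Z] : NHausdorff Z 2 := by
  intro x hx
  obtain ⟨u, v, hu, hv, hxu, hxv, huv⟩ := t2_separation (show x 0 ≠ x 1 from
    fun h => absurd (hx h) (by decide))
  refine ⟨fun k => if k = 0 then u else v, fun i => by fin_cases i <;> simp [hu, hv, hxu, hxv], ?_⟩
  apply eq_empty_iff_forall_notMem.2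
  intro z hz
  rw [mem_iInter] at hz
  have h0 := hz 0; have h1 := hz 1
  simp only [show (0:Fin 2) = 0 from rfl, if_true, reduceIte] at h0 h1
  exact huv.le_bot ⟨h0, h1⟩

lemma t2_of_nh2 {Z : Type u} [TopologicalSpace Z] (h : NHausdorff Z 2) : T2Space Z := by
  constructor
  intro a b hab
  obtain ⟨U, hU, hI⟩ := h (fun k => if k = 0 then a else b) (by
    intro i j hij; fin_cases i <;> fin_cases j <;> simp_all)
  refine ⟨U 0, U 1, (hU 0).1, (hU 1).1, by simpa using (hU 0).2, by simpa using (hU 1).2, ?_⟩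
  rw [Set.disjoint_left]
  intro z h0 h1
  have : z ∈ ⋂ i, U i := mem_iInter.2 fun i => by fin_cases i <;> assumption
  rw [hI] at this; exact this

lemma isOpen_Y8 (V : Set Y8) : IsOpen V ↔ ∀ i : Fin 3, Sum.inl i ∈ V →
    ∃ N : ℕ, ∀ m ≥ N, ∀ j : Fin 3, j ≠ i → Sum.inr (m, j) ∈ V := Iff.rfl

/-- basic neighborhood of `inl i` -/
def Uop (i : Fin 3) (N : ℕ) : Set Y8 :=
  {z | z = Sum.inl i ∨ ∃ m, ∃ j : Fin 3, N ≤ m ∧ j ≠ i ∧ z = Sum.inr (m, j)}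

lemma Uop_open (i : Fin 3) (N : ℕ) : IsOpen (Uop i N) := by
  rw [isOpen_Y8]
  intro i' hi'
  rcases hi' with h | ⟨m, j, _, _, h⟩
  · obtain rfl : i' = i := Sum.inl.inj h
    exact ⟨N, fun m hm j hj => Or.inr ⟨m, j, hm, hj, rfl⟩⟩
  · exact absurd h (by simp)

lemma mem_Uop (i : Fin 3) (N : ℕ) : Sum.inl i ∈ Uop i N := Or.inl rfl

lemma inr_open (p : ℕ × Fin 3) : IsOpen ({Sum.inr p} : Set Y8) := by
  rw [isOpen_Y8]; intro i hi; exact absurd hi (by simp)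

lemma inr_mem_Uop {p : ℕ × Fin 3} {i : Fin 3} {N : ℕ} (h : Sum.inr p ∈ Uop i N) :
    N ≤ p.1 ∧ p.2 ≠ i := by
  rcases h with h | ⟨m, j, hm, hj, h⟩
  · exact absurd h (by simp)
  · obtain ⟨rfl, rfl⟩ : p.1 = m ∧ p.2 = j := by
      have := Sum.inr.inj h; exact ⟨congrArg Prod.fst this, congrArg Prod.snd this⟩
    exact ⟨hm, hj⟩

lemma nh3_Y8 : NHausdorff Y8 3 := by
  intro x hx
  by_cases hc : ∃ k p, x k = Sum.inr p
  · obtain ⟨k0, p, hk0⟩ := hc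
    refine ⟨fun k => Sum.elim (fun i => Uop i (p.1 + 1)) (fun q => ({Sum.inr q} : Set Y8)) (x k),
      ?_, ?_⟩
    · intro k
      rcases h : x k with i | q <;> dsimp only <;> rw [h]
      · exact ⟨Uop_open i _, mem_Uop i _⟩
      · exact ⟨inr_open q, rfl⟩
    · apply eq_empty_iff_forall_notMem.2
      intro z hz
      rw [mem_iInter] at hz
      have hz0 := hz k0
      rw [hk0] at hz0
      obtain rfl : z = Sum.inr p := hz0
      -- pick another index
      obtain ⟨k1, hk1⟩ := exists_ne k0
      have hz1 := hz k1
      rcases h : x k1 with i | q <;> rw [h] at hz1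
      · have := (inr_mem_Uop hz1).1; omega
      · have : p = q := Sum.inr.inj hz1
        exact hk1 (hx (by rw [h, hk0, this]))
  · push_neg at hc
    have hf : ∀ k, ∃ i, x k = Sum.inl i := by
      intro k
      rcases h : x k with i | q
      · exact ⟨i, rfl⟩
      · exact absurd h (hc k q)
    choose f hfx using hf
    have hfi : Function.Injective f := fun a b h => hx (by rw [hfx, hfx, h])
    have hfs : Function.Surjective f := Finite.surjective_of_injective hfi
    refine ⟨fun k => Uop (f k) 0, fun k => by rw [hfx k]; exact ⟨Uop_open _ _, mem_Uop _ _⟩, ?_⟩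
    apply eq_empty_iff_forall_notMem.2
    intro z hz
    rw [mem_iInter] at hz
    rcases z with i | ⟨m, j⟩
    · have h0 : i = f 0 := by
        rcases hz 0 with h | ⟨_, _, _, _, h⟩
        · exact Sum.inl.inj h
        · exact absurd h (by simp)
      have h1 : i = f 1 := by
        rcases hz 1 with h | ⟨_, _, _, _, h⟩
        · exact Sum.inl.inj h
        · exact absurd h (by simp)
      exact absurd (hfi (h0 ▸ h1 ▸ rfl : f 0 = f 1)) (by decide)
    · obtain ⟨k, hk⟩ := hfs j
      have := (inr_mem_Uop (hz k)).2
      exact this hk.symm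

lemma not_nh2_Y8 : ¬ NHausdorff Y8 2 := by
  intro h
  obtain ⟨U, hU, hI⟩ := h (fun k => if k = 0 then Sum.inl 0 else Sum.inl 1) (by
    intro i j hij; fin_cases i <;> fin_cases j <;> simp_all)
  have h0 := (hU 0).2
  have h1 := (hU 1).2
  simp only [reduceIte] at h0 h1
  obtain ⟨N0, hN0⟩ := (isOpen_Y8 _).1 (hU 0).1 0 h0
  obtain ⟨N1, hN1⟩ := (isOpen_Y8 _).1 (hU 1).1 1 h1
  have hz : Sum.inr (max N0 N1, (2 : Fin 3)) ∈ ⋂ i, U i := by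
    apply mem_iInter.2
    intro i
    fin_cases i
    · exact hN0 _ (le_max_left _ _) 2 (by decide)
    · exact hN1 _ (le_max_right _ _) 2 (by decide)
  rw [hI] at hz; exact hz

lemma compact_X8 : IsCompact X8 := by
  apply isCompact_of_finite_subcover
  intro ι U hU hcov
  have h0 : (Sum.inl 0 : Y8) ∈ X8 := Or.inl ⟨0, by decide, rfl⟩
  have h1 : (Sum.inl 1 : Y8) ∈ X8 := Or.inl ⟨1, by decide, rfl⟩
  obtain ⟨a0, ha0⟩ := mem_iUnion.1 (hcov h0)
  obtain ⟨a1, ha1⟩ := mem_iUnion.1 (hcov h1)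
  obtain ⟨N0, hN0⟩ := (isOpen_Y8 _).1 (hU a0) 0 ha0
  obtain ⟨N1, hN1⟩ := (isOpen_Y8 _).1 (hU a1) 1 ha1
  set N := max N0 N1 with hN
  have hg : ∀ p : ℕ × Fin 3, p.2 ≠ 2 → ∃ a, Sum.inr p ∈ U a := fun p hp =>
    mem_iUnion.1 (hcov (Or.inr ⟨p, hp, rfl⟩))
  classical
  let g : ℕ × Fin 3 → ι := fun p => if h : p.2 ≠ 2 then (hg p h).choose else a0
  refine ⟨insert a0 (insert a1 ((Finset.range N ×ˢ (Finset.univ : Finset (Fin 3))).image g)), ?_⟩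
  intro z hz
  rcases hz with ⟨i, hi, rfl⟩ | ⟨p, hp, rfl⟩
  · have hi2 : i ≠ 2 := hi
    have : i = 0 ∨ i = 1 := by omega
    rcases this with rfl | rfl
    · exact mem_iUnion₂.2 ⟨a0, Finset.mem_insert_self _ _, ha0⟩
    · exact mem_iUnion₂.2 ⟨a1, by simp, ha1⟩
  · by_cases hm : N ≤ p.1
    · by_cases hj : p.2 = 0
      · refine mem_iUnion₂.2 ⟨a1, by simp, ?_⟩
        have := hN1 p.1 (le_trans (le_max_right _ _) hm) p.2 (by rw [hj]; decide)
        simpa using this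
      · refine mem_iUnion₂.2 ⟨a0, Finset.mem_insert_self _ _, ?_⟩
        have := hN0 p.1 (le_trans (le_max_left _ _) hm) p.2 hj
        simpa using this
    · refine mem_iUnion₂.2 ⟨g p, ?_, ?_⟩
      · refine Finset.mem_insert_of_mem (Finset.mem_insert_of_mem (Finset.mem_image.2 ⟨p, ?_, rfl⟩))
        exact Finset.mem_product.2 ⟨Finset.mem_range.2 (by omega), Finset.mem_univ _⟩
      · show Sum.inr p ∈ U (g p)
        have : g p = (hg p hp).choose := dif_pos hp
        rw [this]
        exact (hg p hp).choose_spec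

lemma t2_X8 : T2Space ↥X8 := by
  constructor
  intro a b hab
  have key : ∃ V1 V2 : Set Y8, IsOpen V1 ∧ IsOpen V2 ∧ (a : Y8) ∈ V1 ∧ (b : Y8) ∈ V2 ∧
      ∀ w ∈ X8, w ∈ V1 → w ∈ V2 → False := by
    have hne : (a : Y8) ≠ (b : Y8) := fun h => hab (Subtype.ext h)
    rcases a.2 with ⟨i, hi, hai⟩ | ⟨p, hp, hap⟩ <;>
      rcases b.2 with ⟨i', hi', hbi⟩ | ⟨q, hq, hbq⟩
    · -- inl i vs inl i'
      refine ⟨Uop i 0, Uop i' 0, Uop_open _ _, Uop_open _ _, hai ▸ mem_Uop _ _,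
        hbi ▸ mem_Uop _ _, ?_⟩
      have hii' : i ≠ i' := fun h => hne (by rw [← hai, ← hbi, h])
      intro w hw hw1 hw2
      rcases hw with ⟨i'', hi'', rfl⟩ | ⟨r, hr, rfl⟩
      · have e1 : i'' = i := Sum.inl.inj (hw1.resolve_right (by rintro ⟨_, _, _, _, h⟩; simp at h))
        have e2 : i'' = i' := Sum.inl.inj (hw2.resolve_right (by rintro ⟨_, _, _, _, h⟩; simp at h))
        exact hii' (e1 ▸ e2)
      · have e1 := (inr_mem_Uop hw1).2
        have e2 := (inr_mem_Uop hw2).2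
        have : (r.2 : Fin 3) ≠ 2 := hr
        have hi2 : i ≠ 2 := hi
        have hi2' : i' ≠ 2 := hi'
        -- r.2 ≠ i, r.2 ≠ i', r.2 ≠ 2, i ≠ i', i ≠ 2, i' ≠ 2
        omega
    · -- inl i vs inr q
      refine ⟨Uop i (q.1 + 1), {Sum.inr q}, Uop_open _ _, inr_open _, hai ▸ mem_Uop _ _,
        hbq ▸ rfl, ?_⟩
      intro w _ hw1 hw2
      obtain rfl : w = Sum.inr q := hw2
      have := (inr_mem_Uop hw1).1; omega
    · -- inr p vs inl i'
      refine ⟨{Sum.inr p}, Uop i' (p.1 + 1), inr_open _, Uop_open _ _, hap ▸ rfl,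
        hbi ▸ mem_Uop _ _, ?_⟩
      intro w _ hw1 hw2
      obtain rfl : w = Sum.inr p := hw1
      have := (inr_mem_Uop hw2).1; omega
    · -- inr p vs inr q
      refine ⟨{Sum.inr p}, {Sum.inr q}, inr_open _, inr_open _, hap ▸ rfl, hbq ▸ rfl, ?_⟩
      intro w _ hw1 hw2
      obtain rfl : w = Sum.inr p := hw1
      exact hne (by rw [← hap, ← hbq, Sum.inr.inj hw2])
  obtain ⟨V1, V2, hV1, hV2, haV, hbV, hdisj⟩ := key
  refine ⟨Subtype.val ⁻¹' V1, Subtype.val ⁻¹' V2, hV1.preimage continuous_subtype_val,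
    hV2.preimage continuous_subtype_val, haV, hbV, ?_⟩
  rw [Set.disjoint_left]
  rintro ⟨w, hw⟩ h1 h2
  exact hdisj w hw h1 h2

lemma not_closed_X8 : ¬ IsClosed X8 := by
  intro h
  have hopen : IsOpen X8ᶜ := h.isOpen_compl
  have h2 : Sum.inl 2 ∈ X8ᶜ := by
    intro hmem
    rcases hmem with ⟨i, hi, heq⟩ | ⟨p, _, heq⟩
    · exact hi (Sum.inl.inj heq)
    · simp at heq
  obtain ⟨N, hN⟩ := (isOpen_Y8 _).1 hopen 2 h2
  exact hN N le_rfl 0 (by decide) (Or.inr ⟨(N, 0), show (0 : Fin 3) ≠ 2 by decide, rfl⟩)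

theorem stmt8 :
    NHausdorff Y8 3 ∧ ¬ NHausdorff Y8 2 ∧
    CompactSpace ↥X8 ∧ T2Space ↥X8 ∧ ¬ IsClosed X8 ∧
    NHClosed ↥X8 2 ∧ ¬ NHClosed ↥X8 3 := by
  have hcomp : CompactSpace ↥X8 := isCompact_iff_compactSpace.1 compact_X8
  have ht2 : T2Space ↥X8 := t2_X8
  refine ⟨nh3_Y8, not_nh2_Y8, hcomp, ht2, not_closed_X8, ?_, ?_⟩
  · refine ⟨@nh2_of_t2 _ _ ht2, fun Z tZ e hZ he => ?_⟩
    haveI := t2_of_nh2 hZ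
    haveI := hcomp
    exact (isCompact_range he.continuous).isClosed
  · rintro ⟨-, h⟩
    have hc := h Y8 inferInstance Subtype.val nh3_Y8 IsEmbedding.subtypeVal
    rw [Subtype.range_val] at hc
    exact not_closed_X8 hc
end

section
/- An n-Hausdorff space X is n-H-closed if and only if X is closed in every n-Hausdorff space Y in which X is embedded with |Y∖X| = 1. -/
open Set Topology Function

universe u v

lemma nhaus_subtype {Z : Type u} [TopologicalSpace Z] {n : ℕ}
    (h : NHausdorff Z n) (S : Set Z) : NHausdorff S n := by
  intro x hx
  obtain ⟨U, hU, hI⟩ := h (fun i => (x i : Z))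
    (fun i j hij => hx (Subtype.coe_injective hij))
  refine ⟨fun i => Subtype.val ⁻¹' U i,
    fun i => ⟨(hU i).1.preimage continuous_subtype_val, (hU i).2⟩, ?_⟩
  rw [← Set.preimage_iInter, hI, Set.preimage_empty]

theorem stmt9 {X : Type u} [TopologicalSpace X] (n : ℕ) (hn : 2 ≤ n)
    (hX : NHausdorff X n) :
    NHClosed X n ↔
      ∀ (Z : Type u) (_ : TopologicalSpace Z) (e : X → Z),
        NHausdorff Z n → IsEmbedding e → (Set.range e)ᶜ.encard = 1 →
          IsClosed (Set.range e) := by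
  constructor
  · intro h Z tZ e hZ he _
    exact h.2 Z tZ e hZ he
  · intro h
    refine ⟨hX, fun Z tZ e hZ he => ?_⟩
    by_contra hcl
    obtain ⟨p, hp, hpn⟩ : ∃ p, p ∈ closure (Set.range e) ∧ p ∉ Set.range e := by
      by_contra h'
      push_neg at h'
      exact hcl (closure_subset_iff_isClosed.mp fun z hz => h' z hz)
    set W : Set Z := insert p (Set.range e) with hW
    have hZW : NHausdorff W n := nhaus_subtype hZ W
    set e' : X → W := fun x => ⟨e x, Set.mem_insert_of_mem _ ⟨x, rfl⟩⟩ with he'def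
    have hcont : Continuous e' := Continuous.subtype_mk he.continuous _
    have he' : IsEmbedding e' :=
      IsEmbedding.of_comp hcont continuous_subtype_val he
    have hcompl : (Set.range e')ᶜ = {(⟨p, Set.mem_insert _ _⟩ : W)} := by
      ext w
      simp only [Set.mem_compl_iff, Set.mem_range, Set.mem_singleton_iff,
        Subtype.ext_iff]
      constructor
      · intro hw
        rcases w.2 with h1 | ⟨x, hx⟩
        · exact h1
        · exact absurd ⟨x, hx⟩ hw
      · intro hwp ⟨x, hx⟩
        exact hpn ⟨x, hx.trans hwp⟩
    have hcard : (Set.range e')ᶜ.encard = 1 := by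
      rw [hcompl, Set.encard_singleton]
    have hclosed : IsClosed (Set.range e') := h W _ e' hZW he' hcard
    have himg : Subtype.val '' (Set.range e') = Set.range e := by
      rw [← Set.range_comp]; rfl
    have hpW : (⟨p, Set.mem_insert _ _⟩ : W) ∈ closure (Set.range e') := by
      rw [closure_subtype, himg]; exact hp
    rw [hclosed.closure_eq] at hpW
    obtain ⟨x, hx⟩ := hpW
    exact hpn ⟨x, congrArg Subtype.val hx⟩
end

section
/- An n-Hausdorff space X is n-H-closed if and only if X is n-qH-closed, i.e., every open filter F on X satisfies |aF| ≥ n−1. -/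
open Set Topology Function

universe u v

namespace Stmt11Aux

variable {X : Type u} [TopologicalSpace X]

lemma univ_mem {F : Set (Set X)} (hF : IsOpenFilter F) : univ ∈ F := by
  obtain ⟨U, hU⟩ := hF.nonempty
  exact hF.superset_mem U hU univ isOpen_univ (subset_univ U)

lemma exists_ultra {F : Set (Set X)} (hF : IsOpenFilter F) :
    ∃ G, IsOpenUltrafilter G ∧ F ⊆ G := by
  have hz : ∀ c ⊆ {G : Set (Set X) | IsOpenFilter G}, IsChain (· ⊆ ·) c → c.Nonempty →
      ∃ ub ∈ {G : Set (Set X) | IsOpenFilter G}, ∀ s ∈ c, s ⊆ ub := by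
    intro c hcS hchain hcne
    refine ⟨⋃₀ c, ?_, fun s hs => subset_sUnion_of_mem hs⟩
    obtain ⟨G₀, hG₀⟩ := hcne
    have hof : ∀ G ∈ c, IsOpenFilter G := fun G hG => hcS hG
    constructor
    · obtain ⟨U, hU⟩ := (hof G₀ hG₀).nonempty
      exact ⟨U, G₀, hG₀, hU⟩
    · rintro U ⟨G, hG, hU⟩; exact (hof G hG).isOpen_mem U hU
    · rintro U ⟨G, hG, hU⟩; exact (hof G hG).nonempty_mem U hU
    · rintro U ⟨G₁, hG₁, hU⟩ V ⟨G₂, hG₂, hV⟩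
      rcases eq_or_ne G₁ G₂ with rfl | hne
      · exact ⟨G₁, hG₁, (hof G₁ hG₁).inter_mem U hU V hV⟩
      · rcases hchain hG₁ hG₂ hne with hsub | hsub
        · exact ⟨G₂, hG₂, (hof G₂ hG₂).inter_mem U (hsub hU) V hV⟩
        · exact ⟨G₁, hG₁, (hof G₁ hG₁).inter_mem U hU V (hsub hV)⟩
    · rintro U ⟨G, hG, hU⟩ V hVo hUV
      exact ⟨G, hG, (hof G hG).superset_mem U hU V hVo hUV⟩
  obtain ⟨m, hFm, hm⟩ := zorn_subset_nonempty {G : Set (Set X) | IsOpenFilter G} hz F hF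
  exact ⟨m, ⟨hm.1, fun G hG hmG => (hm.2 hG hmG).antisymm hmG⟩, hFm⟩

lemma ultra_absorb {G : Set (Set X)} (hG : IsOpenUltrafilter G) {W : Set X}
    (hW : IsOpen W) (h : ∀ A ∈ G, (W ∩ A).Nonempty) : W ∈ G := by
  set G' := {V : Set X | IsOpen V ∧ ∃ A ∈ G, W ∩ A ⊆ V} with hG'def
  have hG' : IsOpenFilter G' := by
    constructor
    · obtain ⟨A, hA⟩ := hG.1.nonempty
      exact ⟨W, hW, A, hA, inter_subset_left⟩
    · rintro V ⟨hVo, _⟩; exact hVo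
    · rintro V ⟨hVo, A, hA, hs⟩; exact (h A hA).mono hs
    · rintro V₁ ⟨h1, A₁, hA₁, s1⟩ V₂ ⟨h2, A₂, hA₂, s2⟩
      exact ⟨h1.inter h2, A₁ ∩ A₂, hG.1.inter_mem A₁ hA₁ A₂ hA₂,
        fun x hx => ⟨s1 ⟨hx.1, hx.2.1⟩, s2 ⟨hx.1, hx.2.2⟩⟩⟩
    · rintro V ⟨hVo, A, hA, hs⟩ V' hV'o hVV'
      exact ⟨hV'o, A, hA, hs.trans hVV'⟩
  have hsub : G ⊆ G' := fun V hV =>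
    ⟨hG.1.isOpen_mem V hV, V, hV, inter_subset_right⟩
  have heq := hG.2 G' hG' hsub
  obtain ⟨A, hA⟩ := hG.1.nonempty
  rw [← heq]
  exact ⟨hW, A, hA, inter_subset_left⟩

lemma iInter_mem_filter {G : Set (Set X)} (hG : IsOpenFilter G) : ∀ {n : ℕ}
    (U : Fin n → Set X), (∀ i, U i ∈ G) → (⋂ i, U i) ∈ G := by
  intro n
  induction n with
  | zero => intro U _; simpa using univ_mem hG
  | succ m ih =>
    intro U hU
    have : (⋂ i, U i) = U 0 ∩ ⋂ i : Fin m, U i.succ := by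
      ext x; simp [Fin.forall_fin_succ]
    rw [this]
    exact hG.inter_mem _ (hU 0) _ (ih _ (fun i => hU i.succ))

/-- Topology on `Option X` extending that of `X`, with neighborhoods of `none`
given by an open filter `F`. -/
def optTop (F : Set (Set X)) (hF : IsOpenFilter F) : TopologicalSpace (Option X) where
  IsOpen O := IsOpen (some ⁻¹' O) ∧ (none ∈ O → some ⁻¹' O ∈ F)
  isOpen_univ := ⟨by simpa using isOpen_univ, fun _ => by simpa using univ_mem hF⟩
  isOpen_inter := by
    rintro O₁ O₂ ⟨h1, h1'⟩ ⟨h2, h2'⟩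
    refine ⟨by rw [preimage_inter]; exact h1.inter h2, fun hn => ?_⟩
    rw [preimage_inter]; exact hF.inter_mem _ (h1' hn.1) _ (h2' hn.2)
  isOpen_sUnion := by
    intro S hS
    constructor
    · rw [preimage_sUnion]
      exact isOpen_biUnion fun O hO => (hS O hO).1
    · rintro ⟨O, hO, hnO⟩
      refine hF.superset_mem _ ((hS O hO).2 hnO) _ ?_ ?_
      · rw [preimage_sUnion]
        exact isOpen_biUnion fun O hO => (hS O hO).1
      · intro x hx; exact ⟨O, hO, hx⟩

lemma isOpen_optTop {F : Set (Set X)} (hF : IsOpenFilter F) (O : Set (Option X)) :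
    IsOpen[optTop F hF] O ↔ IsOpen (some ⁻¹' O) ∧ (none ∈ O → some ⁻¹' O ∈ F) :=
  Iff.rfl

lemma emb_optTop {F : Set (Set X)} (hF : IsOpenFilter F) :
    @IsEmbedding X (Option X) _ (optTop F hF) some := by
  letI := optTop F hF
  refine ⟨⟨?_⟩, Option.some_injective X⟩
  rw [TopologicalSpace.ext_iff]
  intro U
  rw [@isOpen_induced_iff _ _ (optTop F hF)]
  constructor
  · intro hU
    refine ⟨some '' U, ?_, (Option.some_injective X).preimage_image U⟩
    rw [isOpen_optTop]
    refine ⟨by rwa [(Option.some_injective X).preimage_image], fun hn => ?_⟩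
    simp at hn
  · rintro ⟨O, hO, rfl⟩
    exact ((isOpen_optTop hF O).mp hO).1

end Stmt11Aux

theorem stmt11 {X : Type u} [TopologicalSpace X] (n : ℕ) (hn : 2 ≤ n)
    (hX : NHausdorff X n) :
    NHClosed X n ↔ NqHClosed X n := by
  constructor
  · -- n-H-closed → n-qH-closed
    intro hC F hF
    by_contra hlt
    push_neg at hlt
    letI tZ : TopologicalSpace (Option X) := Stmt11Aux.optTop F hF
    have hpre2 : ∀ s : Set X, (some : X → Option X) ⁻¹' (some '' s) = s :=
      fun s => (Option.some_injective X).preimage_image s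
    have hZ : NHausdorff (Option X) n := by
      intro x hinj
      by_cases hnone : ∃ i, x i = none
      · obtain ⟨i₀, hi₀⟩ := hnone
        have hex : ∃ j, j ≠ i₀ ∧ ∃ y, x j = some y ∧ y ∉ adh F := by
          by_contra hall
          push_neg at hall
          set T : Set X := {p | some p ∈ x '' ({i₀}ᶜ : Set (Fin n))} with hTdef
          have hTsub : T ⊆ adh F := by
            rintro p ⟨j, hj, hxj⟩
            exact hall j hj p hxj
          have him : (some : X → Option X) '' T = x '' ({i₀}ᶜ : Set (Fin n)) := by
            apply subset_antisymm
            · rintro _ ⟨p, hp, rfl⟩; exact hp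
            · rintro q ⟨j, hj, rfl⟩
              have hne : x j ≠ none := fun h => hj (hinj (h.trans hi₀.symm))
              obtain ⟨p, hp⟩ := Option.ne_none_iff_exists'.mp hne
              exact ⟨p, ⟨j, hj, hp⟩, hp.symm⟩
          have h1 : T.encard = (x '' ({i₀}ᶜ : Set (Fin n))).encard := by
            rw [← him, (Option.some_injective X).injOn.encard_image]
          have h2 : (x '' ({i₀}ᶜ : Set (Fin n))).encard
              = ({i₀}ᶜ : Set (Fin n)).encard := hinj.injOn.encard_image
          have h3 : ({i₀}ᶜ : Set (Fin n)).encard = ((n - 1 : ℕ) : ℕ∞) := by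
            rw [compl_eq_univ_diff, Set.encard_diff_singleton_of_mem (mem_univ i₀)]
            simp [Set.encard_univ, ENat.coe_sub]
          exact hlt.not_ge (by rw [← h3, ← h2, ← h1]; exact Set.encard_mono hTsub)
        obtain ⟨j, hji, y, hxj, hy⟩ := hex
        have hex2 : ∃ F₀ ∈ F, y ∉ closure F₀ := by
          by_contra hc
          push_neg at hc
          exact hy (mem_iInter₂.mpr hc)
        obtain ⟨F₀, hF₀, hyF₀⟩ := hex2
        have hpre1 : (some : X → Option X) ⁻¹' (insert none (some '' F₀)) = F₀ := by
          ext p; simp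
        refine ⟨fun k => if k = i₀ then insert none (some '' F₀)
          else if k = j then some '' (closure F₀)ᶜ else univ, fun k => ?_, ?_⟩
        · dsimp only
          rcases eq_or_ne k i₀ with rfl | hk
          · rw [if_pos rfl]
            refine ⟨(Stmt11Aux.isOpen_optTop hF _).mpr
              ⟨by rw [hpre1]; exact hF.isOpen_mem F₀ hF₀, fun _ => by rw [hpre1]; exact hF₀⟩, ?_⟩
            rw [hi₀]; exact mem_insert _ _
          · rw [if_neg hk]
            rcases eq_or_ne k j with rfl | hkj
            · rw [if_pos rfl]
              refine ⟨(Stmt11Aux.isOpen_optTop hF _).mpr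
                ⟨by rw [hpre2]; exact isClosed_closure.isOpen_compl, fun hc => absurd hc (by simp)⟩, ?_⟩
              rw [hxj]; exact ⟨y, hyF₀, rfl⟩
            · rw [if_neg hkj]
              exact ⟨(Stmt11Aux.isOpen_optTop hF _).mpr
                ⟨by simp, fun _ => Stmt11Aux.univ_mem hF⟩, mem_univ _⟩
        · rw [eq_empty_iff_forall_notMem]
          intro z hz
          have h₁ := mem_iInter.mp hz i₀
          have h₂ := mem_iInter.mp hz j
          rw [if_pos rfl] at h₁
          rw [if_neg hji, if_pos rfl] at h₂
          obtain ⟨p, hp, rfl⟩ := h₂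
          rcases h₁ with h₁ | ⟨q, hq, hq'⟩
          · exact Option.some_ne_none p h₁
          · exact hp (subset_closure ((Option.some_injective X hq') ▸ hq))
      · push_neg at hnone
        have hsome : ∀ i, (x i).isSome := fun i => Option.ne_none_iff_isSome.mp (hnone i)
        have hxx : ∀ i, x i = some ((x i).get (hsome i)) :=
          fun i => (Option.some_get (hsome i)).symm
        have hinj' : Function.Injective (fun i => (x i).get (hsome i)) := by
          intro a b hab
          dsimp only at hab
          apply hinj
          have h2 := congrArg Option.some hab
          rwa [Option.some_get, Option.some_get] at h2
        obtain ⟨U, hU, hUe⟩ := hX _ hinj'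
        refine ⟨fun i => some '' U i, fun i => ⟨?_, ?_⟩, ?_⟩
        · exact (Stmt11Aux.isOpen_optTop hF _).mpr
            ⟨by rw [hpre2]; exact (hU i).1, fun hc => absurd hc (by simp)⟩
        · rw [hxx i]; exact ⟨_, (hU i).2, rfl⟩
        · rw [eq_empty_iff_forall_notMem]
          intro z hz
          obtain ⟨p, _, rfl⟩ := mem_iInter.mp hz ⟨0, by omega⟩
          have hp : p ∈ ⋂ i, U i := by
            refine mem_iInter.mpr fun i => ?_
            obtain ⟨q, hq, hq'⟩ := mem_iInter.mp hz i
            exact (Option.some_injective X hq') ▸ hq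
          rw [hUe] at hp
          exact hp
    have hcl := hC.2 (Option X) tZ some hZ (Stmt11Aux.emb_optTop hF)
    have hnc : (none : Option X) ∈ closure (range (some : X → Option X)) := by
      rw [mem_closure_iff]
      intro o ho hno
      obtain ⟨ho1, ho2⟩ := (Stmt11Aux.isOpen_optTop hF o).mp ho
      obtain ⟨p, hp⟩ := hF.nonempty_mem _ (ho2 hno)
      exact ⟨some p, hp, p, rfl⟩
    rw [hcl.closure_eq] at hnc
    obtain ⟨p, hp⟩ := hnc
    exact Option.some_ne_none p hp
  · -- n-qH-closed → n-H-closed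
    intro hq
    refine ⟨hX, ?_⟩
    intro Z tZ e hZ he
    apply isClosed_of_closure_subset
    intro z hz
    by_contra hzr
    obtain ⟨m, rfl⟩ : ∃ m, n = m + 1 := ⟨n - 1, by omega⟩
    set F₀ : Set (Set X) := {U | IsOpen U ∧ ∃ V : Set Z, IsOpen V ∧ z ∈ V ∧ e ⁻¹' V ⊆ U}
      with hF₀def
    have hF₀ : IsOpenFilter F₀ := by
      constructor
      · exact ⟨univ, isOpen_univ, univ, isOpen_univ, mem_univ z, subset_univ _⟩
      · rintro U ⟨hU, -⟩; exact hU
      · rintro U ⟨hU, V, hVo, hzV, hVU⟩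
        obtain ⟨w, hwV, p, rfl⟩ := mem_closure_iff.mp hz V hVo hzV
        exact ⟨p, hVU hwV⟩
      · rintro U₁ ⟨h1, V₁, hV1, hz1, hs1⟩ U₂ ⟨h2, V₂, hV2, hz2, hs2⟩
        exact ⟨h1.inter h2, V₁ ∩ V₂, hV1.inter hV2, ⟨hz1, hz2⟩,
          fun p hp => ⟨hs1 hp.1, hs2 hp.2⟩⟩
      · rintro U ⟨hU, V, hVo, hzV, hVU⟩ W hWo hUW
        exact ⟨hWo, V, hVo, hzV, hVU.trans hUW⟩
    obtain ⟨G, hGu, hFG⟩ := Stmt11Aux.exists_ultra hF₀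
    have hcard := hq G hGu.1
    obtain ⟨t, hts, htc⟩ := Set.exists_subset_encard_eq hcard
    have htc' : t.encard = (m : ℕ∞) := by simpa using htc
    have htfin : t.Finite := Set.finite_of_encard_eq_coe htc'
    haveI := htfin.fintype
    have htcard : t.toFinset.card = m := by
      have h := Set.encard_eq_coe_toFinset_card t
      rw [htc'] at h
      exact_mod_cast h.symm
    set eqv := Finset.equivFinOfCardEq htcard with heqv
    set f : Fin m → X := fun i => (eqv.symm i : X) with hfdef
    have hft : ∀ i, f i ∈ t := fun i => Set.mem_toFinset.mp (eqv.symm i).2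
    have hfinj : Function.Injective f := fun a b hab =>
      eqv.symm.injective (Subtype.ext hab)
    set w : Fin (m + 1) → Z := fun i => if h : i = 0 then z else e (f (i.pred h)) with hwdef
    have hw0 : w 0 = z := dif_pos rfl
    have hwi : ∀ (i : Fin (m + 1)) (h : i ≠ 0), w i = e (f (i.pred h)) :=
      fun i h => dif_neg h
    have hwinj : Function.Injective w := by
      intro a b hab
      rcases eq_or_ne a 0 with ha | ha <;> rcases eq_or_ne b 0 with hb | hb
      · rw [ha, hb]
      · subst ha; rw [hw0, hwi b hb] at hab; exact absurd ⟨_, hab.symm⟩ hzr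
      · subst hb; rw [hw0, hwi a ha] at hab; exact absurd ⟨_, hab⟩ hzr
      · rw [hwi a ha, hwi b hb] at hab
        exact Fin.pred_inj.mp (hfinj (he.injective hab))
    obtain ⟨V, hV, hVe⟩ := hZ w hwinj
    have hWmem : ∀ i, e ⁻¹' V i ∈ G := by
      intro i
      rcases eq_or_ne i 0 with rfl | hi
      · exact hFG ⟨(hV 0).1.preimage he.continuous, V 0, (hV 0).1,
          by rw [← hw0]; exact (hV 0).2, subset_rfl⟩
      · apply Stmt11Aux.ultra_absorb hGu ((hV i).1.preimage he.continuous)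
        intro A hA
        have hadh : f (i.pred hi) ∈ adh G := hts (hft _)
        have hadh' : f (i.pred hi) ∈ ⋂ U ∈ G, closure U := hadh
        have hcl : f (i.pred hi) ∈ closure A := mem_iInter₂.mp hadh' A hA
        have hmem : f (i.pred hi) ∈ e ⁻¹' V i := by
          show e _ ∈ V i
          rw [← hwi i hi]
          exact (hV i).2
        exact mem_closure_iff.mp hcl _ ((hV i).1.preimage he.continuous) hmem
    have hint := Stmt11Aux.iInter_mem_filter hGu.1 _ hWmem
    obtain ⟨p, hp⟩ := hGu.1.nonempty_mem _ hint
    have hep : e p ∈ ⋂ i, V i := mem_iInter.mpr fun i => mem_iInter.mp hp i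
    rw [hVe] at hep
    exact hep
end

section
/- If Y is an n-Hausdorff extension of a space X, then the strict extension Y^# (with topology generated by the sets oU = {p ∈ Y : U ∈ O^p} for U open in X) is n-Hausdorff, the simple extension Y^+ is n-Hausdorff, and X itself is n-Hausdorff. -/
open Set Topology Function

universe u v

/-- For `U` open in `Y`, the set `o(U ∩ X) = {p ∈ Y : U ∩ X ∈ O^p}`, where
`O^p = {V ∩ X : p ∈ V ∈ τ(Y)}`. -/
def oSet {Y : Type u} [TopologicalSpace Y] (X : Set Y) (U : Set Y) : Set Y :=
  {p | ∃ V : Set Y, IsOpen V ∧ p ∈ V ∧ V ∩ X = U ∩ X}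

/-- The strict extension topology on `Y` (relative to the dense subset `X`),
with base `{oU : U open in X}`. -/
def strictTop (Y : Type u) [TopologicalSpace Y] (X : Set Y) : TopologicalSpace Y :=
  TopologicalSpace.generateFrom {S | ∃ U : Set Y, IsOpen U ∧ S = oSet X U}

/-- The simple extension topology on `Y` (relative to the dense subset `X`),
generated by the sets `{p} ∪ U` for `U ∈ O^p`. -/
def simpleTop (Y : Type u) [TopologicalSpace Y] (X : Set Y) : TopologicalSpace Y :=
  TopologicalSpace.generateFrom
    {S | ∃ (p : Y) (V : Set Y), IsOpen V ∧ p ∈ V ∧ S = insert p (V ∩ X)}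

theorem stmt13 {Y : Type u} [TopologicalSpace Y] (n : ℕ) (hn : 2 ≤ n)
    (X : Set Y) (hd : Dense X) (hY : NHausdorff Y n) :
    @NHausdorff Y (strictTop Y X) n ∧ @NHausdorff Y (simpleTop Y X) n ∧
      NHausdorff ↥X n := by
  refine ⟨?_, ?_, ?_⟩
  · -- strict extension
    intro x hx
    obtain ⟨U, hU, hUe⟩ := hY x hx
    refine ⟨fun i => oSet X (U i), fun i => ⟨?_, ?_⟩, ?_⟩
    · exact TopologicalSpace.GenerateOpen.basic _ ⟨U i, (hU i).1, rfl⟩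
    · exact ⟨U i, (hU i).1, (hU i).2, rfl⟩
    · rw [Set.eq_empty_iff_forall_notMem]
      intro p hp
      simp only [Set.mem_iInter, oSet, Set.mem_setOf_eq] at hp
      choose V hVo hpV hVX using hp
      have hW : (⋂ i, V i).Nonempty := ⟨p, Set.mem_iInter.mpr hpV⟩
      obtain ⟨q, hq, hqX⟩ := hd.inter_open_nonempty _ (isOpen_iInter_of_finite hVo) hW
      have : q ∈ ⋂ i, U i := Set.mem_iInter.mpr fun i => by
        have : q ∈ V i ∩ X := ⟨Set.mem_iInter.mp hq i, hqX⟩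
        rw [hVX i] at this
        exact this.1
      rw [hUe] at this
      exact this
  · -- simple extension
    have key : ∀ U : Set Y, IsOpen U → @IsOpen Y (simpleTop Y X) U := by
      intro U hU
      have : U = ⋃ p ∈ U, insert p (U ∩ X) := by
        apply Set.Subset.antisymm
        · intro p hp
          exact Set.mem_biUnion hp (Set.mem_insert p _)
        · intro q hq
          simp only [Set.mem_iUnion] at hq
          obtain ⟨p, hp, hq⟩ := hq
          rcases hq with rfl | ⟨h, _⟩
          · exact hp
          · exact h
      rw [this]
      exact @isOpen_biUnion Y Y (simpleTop Y X) U _ fun p hp =>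
        TopologicalSpace.GenerateOpen.basic _ ⟨p, U, hU, hp, rfl⟩
    intro x hx
    obtain ⟨U, hU, hUe⟩ := hY x hx
    exact ⟨U, fun i => ⟨key _ (hU i).1, (hU i).2⟩, hUe⟩
  · -- X itself
    intro x hx
    obtain ⟨U, hU, hUe⟩ := hY (fun i => (x i : Y)) fun i j h => hx (Subtype.val_injective h)
    refine ⟨fun i => Subtype.val ⁻¹' U i, fun i => ⟨(hU i).1.preimage continuous_subtype_val, (hU i).2⟩, ?_⟩
    rw [Set.eq_empty_iff_forall_notMem]
    intro q hq
    have : (q : Y) ∈ ⋂ i, U i := Set.mem_iInter.mpr fun i => Set.mem_iInter.mp hq i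
    rw [hUe] at this
    exact this
end

section
/- Let X be an n-Hausdorff space and U an open ultrafilter on X with |aU| < n−1. Set k = n−1−|aU| and Y = X ∪ {p₁,…,p_k} with new points, topologized so that V ⊆ Y is open iff V ∩ X is open in X and (pᵢ ∈ V implies V ∩ X ∈ U). Then Y is n-Hausdorff, X is dense in Y, and the unique open ultrafilter V on Y containing U satisfies |a_Y(V)| = n−1. -/
open Set Topology Function

universe u v

lemma univ_mem_of_isOpenFilter {X : Type u} [TopologicalSpace X] {F : Set (Set X)}
    (hF : IsOpenFilter F) : Set.univ ∈ F := by
  obtain ⟨U, hU⟩ := hF.nonempty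
  exact hF.superset_mem U hU Set.univ isOpen_univ (Set.subset_univ U)

/-- The extension `Y = X ∪ {p₁,…,p_k}` obtained by adding `k` new points all with
neighborhood trace the open filter `F`: `V` is open iff `V ∩ X` is open in `X` and
`pᵢ ∈ V` implies `V ∩ X ∈ F`. -/
def addPointsTop {X : Type u} [TopologicalSpace X] (F : Set (Set X))
    (hF : IsOpenFilter F) (k : ℕ) : TopologicalSpace (X ⊕ Fin k) where
  IsOpen V := IsOpen (Sum.inl ⁻¹' V) ∧ ∀ i : Fin k, Sum.inr i ∈ V → Sum.inl ⁻¹' V ∈ F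
  isOpen_univ := by
    refine ⟨by simpa using isOpen_univ, fun _ _ => ?_⟩
    simpa using univ_mem_of_isOpenFilter hF
  isOpen_inter := by
    rintro s t ⟨hs1, hs2⟩ ⟨ht1, ht2⟩
    refine ⟨by rw [Set.preimage_inter]; exact hs1.inter ht1, fun i hi => ?_⟩
    rw [Set.preimage_inter]
    exact hF.inter_mem _ (hs2 i hi.1) _ (ht2 i hi.2)
  isOpen_sUnion := by
    intro S hS
    have hop : IsOpen (Sum.inl ⁻¹' ⋃₀ S : Set X) := by
      rw [Set.preimage_sUnion]
      exact isOpen_biUnion fun s hs => (hS s hs).1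
    refine ⟨hop, ?_⟩
    rintro i ⟨s, hsS, his⟩
    exact hF.superset_mem _ ((hS s hsS).2 i his) _ hop
      (fun x hx => ⟨s, hsS, hx⟩)

/-! Since `X` is open and dense in `Y`, the open sets of `Y` whose trace lies in `U` form an open
ultrafilter `V`. Its adherence consists of `aU` and all new points, as every neighbourhood of a new
point traces a member of `U`; so `|a_Y V| = |aU| + k = n - 1`. To separate `n` distinct points of
`Y`: if they all lie in `X`, use the `n`-Hausdorffness of `X`, which transfers since `X` is open in
`Y`. Otherwise one of them is a new point, and as fewer than `n` points lie in `a_Y V`, another one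
is some `x ∈ X \ aU`; then `x ∉ cl W` for some `W ∈ U`, and `X \ cl W` and `W ∪ {p₁,…,p_k}` are
disjoint open neighbourhoods of these two points. -/

section OpenFilter

variable {X : Type u} [TopologicalSpace X] {F : Set (Set X)}

theorem IsOpenUltrafilter.mem_of_forall_inter_nonempty (hF : IsOpenUltrafilter F) {A : Set X}
    (hA : IsOpen A) (h : ∀ V ∈ F, (A ∩ V).Nonempty) : A ∈ F := by
  -- the open sets containing some `A ∩ V` with `V ∈ F` form an open filter containing `F` and `A`
  let G : Set (Set X) := {O | IsOpen O ∧ ∃ V ∈ F, A ∩ V ⊆ O}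
  have hG : IsOpenFilter G :=
    { nonempty := ⟨A, hA, univ, univ_mem_of_isOpenFilter hF.1, inter_subset_left⟩
      isOpen_mem := fun _ hO => hO.1
      nonempty_mem := fun _ ⟨_, V, hV, hAV⟩ => (h V hV).mono hAV
      inter_mem := fun _ ⟨hO₁, V₁, hV₁, hs₁⟩ _ ⟨hO₂, V₂, hV₂, hs₂⟩ =>
        ⟨hO₁.inter hO₂, V₁ ∩ V₂, hF.1.inter_mem _ hV₁ _ hV₂,
          fun _ hx => ⟨hs₁ ⟨hx.1, hx.2.1⟩, hs₂ ⟨hx.1, hx.2.2⟩⟩⟩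
      superset_mem := fun _ ⟨_, V, hV, hs⟩ _ hO' hOO' => ⟨hO', V, hV, hs.trans hOO'⟩ }
  have hFG : F ⊆ G := fun V hV => ⟨hF.1.isOpen_mem V hV, V, hV, inter_subset_right⟩
  rw [← hF.2 G hG hFG]
  exact ⟨hA, univ, univ_mem_of_isOpenFilter hF.1, inter_subset_left⟩

variable {Y : Type v} [TopologicalSpace Y] {f : X → Y}

theorem isOpenFilter_setOf_preimage_mem (hf : Continuous f) (hF : IsOpenFilter F) :
    IsOpenFilter {W : Set Y | IsOpen W ∧ f ⁻¹' W ∈ F} where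
  nonempty := ⟨univ, isOpen_univ, univ_mem_of_isOpenFilter hF⟩
  isOpen_mem _ hW := hW.1
  nonempty_mem W hW := ((hF.nonempty_mem _ hW.2).image f).mono (image_preimage_subset f W)
  inter_mem _ hW _ hV := ⟨hW.1.inter hV.1, hF.inter_mem _ hW.2 _ hV.2⟩
  superset_mem _ hW _ hV hWV :=
    ⟨hV, hF.superset_mem _ hW.2 _ (hV.preimage hf) (preimage_mono hWV)⟩

theorem IsDenseInducing.isOpenUltrafilter_setOf_preimage_mem (hf : IsDenseInducing f)
    (hF : IsOpenUltrafilter F) : IsOpenUltrafilter {W : Set Y | IsOpen W ∧ f ⁻¹' W ∈ F} := by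
  refine ⟨isOpenFilter_setOf_preimage_mem hf.continuous hF.1, fun H hH hGH => ?_⟩
  refine Subset.antisymm (fun W hW => ⟨hH.isOpen_mem W hW, ?_⟩) hGH
  have hWo := hH.isOpen_mem W hW
  refine hF.mem_of_forall_inter_nonempty (hWo.preimage hf.continuous) fun V hV => ?_
  obtain ⟨V', hV', rfl⟩ := hf.isInducing.isOpen_iff.mp (hF.1.isOpen_mem V hV)
  have hWV' : (W ∩ V').Nonempty := hH.nonempty_mem _ (hH.inter_mem _ hW _ (hGH ⟨hV', hV⟩))
  obtain ⟨_, ⟨hxW, hxV'⟩, x, rfl⟩ := hf.dense.inter_open_nonempty _ (hWo.inter hV') hWV'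
  exact ⟨x, hxW, hxV'⟩

theorem Topology.IsOpenEmbedding.preimage_adh_setOf_preimage_mem (hf : IsOpenEmbedding f)
    (hF : IsOpenFilter F) : f ⁻¹' adh {W : Set Y | IsOpen W ∧ f ⁻¹' W ∈ F} = adh F := by
  have hcl (W : Set Y) : f ⁻¹' closure W = closure (f ⁻¹' W) :=
    hf.isOpenMap.preimage_closure_eq_closure_preimage hf.continuous W
  ext x
  simp only [adh, mem_preimage, mem_iInter]
  refine ⟨fun h U hU => ?_, fun h W hW => ?_⟩
  · have hfU : IsOpen (f '' U) := hf.isOpenMap U (hF.isOpen_mem U hU)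
    have := h (f '' U) ⟨hfU, by rwa [hf.injective.preimage_image]⟩
    rwa [← mem_preimage, hcl, hf.injective.preimage_image] at this
  · rw [← mem_preimage, hcl]
    exact h _ hW.2

end OpenFilter

section Separation

variable {Y : Type v} [TopologicalSpace Y] {n : ℕ}

theorem exists_isOpen_iInter_eq_empty_of_disjoint (y : Fin n → Y) {i j : Fin n} {U V : Set Y}
    (hU : IsOpen U) (hV : IsOpen V) (hi : y i ∈ U) (hj : y j ∈ V) (hUV : Disjoint U V) :
    ∃ W : Fin n → Set Y, (∀ l, IsOpen (W l) ∧ y l ∈ W l) ∧ ⋂ l, W l = ∅ := by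
  classical
  refine ⟨fun l => (if l = i then U else univ) ∩ (if l = j then V else univ),
    fun l => ⟨?_, ?_⟩, eq_empty_of_forall_notMem fun z hz => ?_⟩
  · refine IsOpen.inter ?_ ?_ <;> split_ifs <;> first | assumption | exact isOpen_univ
  · constructor <;> split_ifs <;> simp_all
  · have hzU := (mem_iInter.1 hz i).1
    have hzV := (mem_iInter.1 hz j).2
    rw [if_pos rfl] at hzU hzV
    exact hUV.ne_of_mem hzU hzV rfl

theorem exists_isOpen_iInter_eq_empty_of_isOpenMap {X : Type u} [TopologicalSpace X]
    {f : X → Y} (hf : IsOpenMap f) (hinj : Injective f) (hn : n ≠ 0) (hX : NHausdorff X n)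
    {x : Fin n → X} (hx : Injective x) :
    ∃ W : Fin n → Set Y, (∀ i, IsOpen (W i) ∧ f (x i) ∈ W i) ∧ ⋂ i, W i = ∅ := by
  obtain ⟨U, hU, hUe⟩ := hX x hx
  have : Nonempty (Fin n) := ⟨⟨0, Nat.pos_of_ne_zero hn⟩⟩
  refine ⟨fun i => f '' U i, fun i => ⟨hf _ (hU i).1, mem_image_of_mem f (hU i).2⟩, ?_⟩
  rw [← hinj.injOn.image_iInter_eq, hUe, image_empty]

theorem exists_apply_notMem_of_encard_lt {α : Type*} {y : Fin n → α} (hy : Injective y)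
    {s : Set α} (hs : s.encard < n) : ∃ i, y i ∉ s := by
  by_contra! h
  have := (hy.encard_range.trans (encard_le_encard (range_subset_iff.2 h))).trans_lt hs
  simp at this

end Separation

section AddPoints

variable {X : Type u} [TopologicalSpace X] {F : Set (Set X)} (hF : IsOpenFilter F) (k : ℕ)

local notation "τ" => addPointsTop F hF k

theorem isOpenEmbedding_inl_addPointsTop : @IsOpenEmbedding X (X ⊕ Fin k) _ τ Sum.inl := by
  let := τ
  refine .of_continuous_injective_isOpenMap (continuous_def.2 fun _ hV => hV.1)
    Sum.inl_injective fun U hU => ⟨?_, ?_⟩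
  · rwa [Sum.inl_injective.preimage_image]
  · simp

theorem denseRange_inl_addPointsTop : @DenseRange (X ⊕ Fin k) τ X Sum.inl := by
  let := τ
  refine dense_iff_inter_open.2 fun V hV ⟨y, hy⟩ => ?_
  rcases y with x | i
  · exact ⟨_, hy, x, rfl⟩
  · obtain ⟨x, hx⟩ := hF.nonempty_mem _ (hV.2 i hy)
    exact ⟨_, hx, x, rfl⟩

theorem isOpen_inl_image_union_range_inr {W : Set X} (hW : W ∈ F) :
    IsOpen[τ] (Sum.inl '' W ∪ range Sum.inr) :=
  have hpre : Sum.inl ⁻¹' (Sum.inl '' W ∪ range (Sum.inr : Fin k → X ⊕ Fin k)) = W := by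
    rw [preimage_union, Sum.inl_injective.preimage_image, preimage_inl_range_inr, union_empty]
  ⟨by rw [hpre]; exact hF.isOpen_mem W hW, fun _ _ => by rwa [hpre]⟩

theorem adh_addPointsTop :
    @adh _ τ {W | IsOpen[τ] W ∧ Sum.inl ⁻¹' W ∈ F} = Sum.inl '' adh F ∪ range Sum.inr := by
  let := τ
  ext (x | i)
  · rw [← (isOpenEmbedding_inl_addPointsTop hF k).preimage_adh_setOf_preimage_mem hF]
    simp
  · simp only [mem_union, mem_range, exists_apply_eq_apply, or_true, iff_true, adh, mem_iInter]
    refine fun W hW => mem_closure_iff.2 fun V hV hiV => ?_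
    obtain ⟨x, hxV, hxW⟩ := hF.nonempty_mem _ (hF.inter_mem _ (hV.2 i hiV) _ hW.2)
    exact ⟨_, hxV, hxW⟩

theorem encard_adh_addPointsTop :
    (@adh _ τ {W | IsOpen[τ] W ∧ Sum.inl ⁻¹' W ∈ F}).encard = (adh F).encard + k := by
  rw [adh_addPointsTop, encard_union_eq
    (isCompl_range_inl_range_inr.disjoint.mono_left (image_subset_range _ _)),
    Sum.inl_injective.encard_image, ← image_univ, Sum.inr_injective.encard_image]
  simp

theorem nHausdorff_addPointsTop {n : ℕ} (hX : NHausdorff X n) (hk : (adh F).encard + k < n) :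
    @NHausdorff (X ⊕ Fin k) τ n := by
  let := τ
  have hinl := isOpenEmbedding_inl_addPointsTop hF k
  intro y hy
  by_cases hnew : ∃ i j, y i = Sum.inr j
  · obtain ⟨i₀, j, hi₀⟩ := hnew
    have hadh : (@adh _ τ {W | IsOpen W ∧ Sum.inl ⁻¹' W ∈ F}).encard < n := by
      rwa [encard_adh_addPointsTop]
    obtain ⟨i₁, hi₁⟩ := exists_apply_notMem_of_encard_lt hy hadh
    rw [adh_addPointsTop, mem_union, not_or] at hi₁
    obtain ⟨x, hx⟩ : ∃ x, y i₁ = Sum.inl x := by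
      rcases h : y i₁ with x | j'
      · exact ⟨x, rfl⟩
      · exact absurd ⟨j', h.symm⟩ hi₁.2
    obtain ⟨W, hW, hxW⟩ : ∃ W ∈ F, x ∉ closure W := by
      simpa [adh, hx] using hi₁.1
    refine exists_isOpen_iInter_eq_empty_of_disjoint y
      (hinl.isOpenMap _ isClosed_closure.isOpen_compl) (isOpen_inl_image_union_range_inr hF k hW)
      (hx ▸ mem_image_of_mem Sum.inl hxW) (by rw [hi₀]; exact Or.inr (mem_range_self j)) ?_
    refine disjoint_union_right.2 ⟨?_, ?_⟩
    · exact (disjoint_image_iff Sum.inl_injective).2 (disjoint_compl_left.mono_right subset_closure)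
    · exact isCompl_range_inl_range_inr.disjoint.mono_left (image_subset_range _ _)
  · push Not at hnew
    have hinX (i : Fin n) : ∃ x, y i = Sum.inl x := by
      rcases h : y i with x | j
      exacts [⟨x, rfl⟩, absurd h (hnew i j)]
    choose x hx using hinX
    obtain rfl : y = Sum.inl ∘ x := funext hx
    have hn : n ≠ 0 := by rintro rfl; exact not_lt_zero hk
    exact exists_isOpen_iInter_eq_empty_of_isOpenMap hinl.isOpenMap Sum.inl_injective hn hX
      hy.of_comp

end AddPoints

theorem stmt14_general {X : Type u} [TopologicalSpace X] (n : ℕ)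
    (hX : NHausdorff X n) (F : Set (Set X)) (hF : IsOpenUltrafilter F)
    (m : ℕ) (hm : (adh F).encard = m) (hmn : m < n - 1) :
    let tY : TopologicalSpace (X ⊕ Fin (n - 1 - m)) := addPointsTop F hF.1 (n - 1 - m)
    @NHausdorff (X ⊕ Fin (n - 1 - m)) tY n ∧
    @IsEmbedding X (X ⊕ Fin (n - 1 - m)) _ tY Sum.inl ∧
    @Dense (X ⊕ Fin (n - 1 - m)) tY (Set.range Sum.inl) ∧
    @IsOpenUltrafilter (X ⊕ Fin (n - 1 - m)) tY
      {W | IsOpen[tY] W ∧ Sum.inl ⁻¹' W ∈ F} ∧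
    (@adh (X ⊕ Fin (n - 1 - m)) tY {W | IsOpen[tY] W ∧ Sum.inl ⁻¹' W ∈ F}).encard
      = (n - 1 : ℕ) := by
  intro tY
  have hinl := isOpenEmbedding_inl_addPointsTop hF.1 (n - 1 - m)
  have hdense := denseRange_inl_addPointsTop hF.1 (n - 1 - m)
  have hk : (adh F).encard + ↑(n - 1 - m) < n := by
    rw [hm]
    exact_mod_cast (by omega : m + (n - 1 - m) < n)
  refine ⟨nHausdorff_addPointsTop hF.1 _ hX hk, hinl.isEmbedding, hdense,
    IsDenseInducing.isOpenUltrafilter_setOf_preimage_mem ⟨hinl.isInducing, hdense⟩ hF, ?_⟩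
  rw [encard_adh_addPointsTop, hm]
  exact_mod_cast (by omega : m + (n - 1 - m) = n - 1)

theorem stmt14 {X : Type u} [TopologicalSpace X] (n : ℕ) (hn : 2 ≤ n)
    (hX : NHausdorff X n) (F : Set (Set X)) (hF : IsOpenUltrafilter F)
    (m : ℕ) (hm : (adh F).encard = m) (hmn : m < n - 1) :
    let tY : TopologicalSpace (X ⊕ Fin (n - 1 - m)) := addPointsTop F hF.1 (n - 1 - m)
    @NHausdorff (X ⊕ Fin (n - 1 - m)) tY n ∧
    @IsEmbedding X (X ⊕ Fin (n - 1 - m)) _ tY Sum.inl ∧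
    @Dense (X ⊕ Fin (n - 1 - m)) tY (Set.range Sum.inl) ∧
    @IsOpenUltrafilter (X ⊕ Fin (n - 1 - m)) tY
      {W | IsOpen[tY] W ∧ Sum.inl ⁻¹' W ∈ F} ∧
    (@adh (X ⊕ Fin (n - 1 - m)) tY {W | IsOpen[tY] W ∧ Sum.inl ⁻¹' W ∈ F}).encard
      = (n - 1 : ℕ) :=
  stmt14_general n hX F hF m hm hmn
end
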